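/- arXiv:1206.5352 — 5 statements merged into one kernel-verified Lean document; each statement's English description precedes it below -/
import Mathlib

section
/- Let x be an infinite word over a finite alphabet with subword complexity ρ. For every n ≥ 1, the set E_x(n) of positions of novel occurrences of length-n factors is a union of at most ρ(n) − ρ(n−1) + 1 maximal contiguous blocks of integers. -/
/-- The factor x[i..i+n-1] of the infinite word x, as a list. -/
def factor {A : Type*} (x : ℕ → A) (i n : ℕ) : List A :=
  (List.range n).map fun t => x (i + t)

/-- The occurrence of the length-n factor at position i is novel. -/
def novel {A : Type*} (x : ℕ → A) (i n : ℕ) : Prop :=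
  ∀ j < i, factor x j n ≠ factor x i n

/-- The set of positions of novel occurrences of length-n factors. -/
def novelSet {A : Type*} (x : ℕ → A) (n : ℕ) : Set ℕ := {i | novel x i n}

/-- The number of maximal contiguous blocks of a set of naturals,
counted as the number of "left endpoints". -/
noncomputable def numBlocks (S : Set ℕ) : ℕ :=
  Set.ncard {i | i ∈ S ∧ (i = 0 ∨ i - 1 ∉ S)}

/-- The subword complexity of x: the number of distinct factors of length n. -/
noncomputable def complexity {A : Type*} (x : ℕ → A) (n : ℕ) : ℕ :=
  Set.ncard {w : List A | ∃ i, w = factor x i n}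

/-! Novel occurrences of length `n - 1` are novel for length `n`, and the novel positions are in
bijection with the factors, so `E(n) \ E(n - 1)` has exactly `ρ(n) - ρ(n - 1)` elements. Every
left endpoint `i ≠ 0` of a block of `E(n)` lies in this difference: since `x[i-1..i+n-2]` occurs
earlier, at some `j`, the factor `x[i..i+n-2]` occurs earlier too, at `j + 1`. -/

theorem numBlocks_le_ncard_add_one {S D : Set ℕ} (hD : D.Finite)
    (h : ∀ i ∈ S, i ≠ 0 → i - 1 ∉ S → i ∈ D) : numBlocks S ≤ D.ncard + 1 := by
  have hsub : {i | i ∈ S ∧ (i = 0 ∨ i - 1 ∉ S)} ⊆ insert 0 D := by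
    rintro i ⟨hi, rfl | hprev⟩
    · exact Set.mem_insert 0 D
    · by_cases hi0 : i = 0
      · exact hi0 ▸ Set.mem_insert 0 D
      · exact Set.mem_insert_of_mem 0 (h i hi hi0 hprev)
  calc numBlocks S ≤ (insert 0 D).ncard := Set.ncard_le_ncard hsub (hD.insert 0)
    _ ≤ D.ncard + 1 := Set.ncard_insert_le 0 D

section Factors

variable {A : Type*} (x : ℕ → A)

theorem factor_eq_factor_iff {i j n : ℕ} :
    factor x i n = factor x j n ↔ ∀ t < n, x (i + t) = x (j + t) := by
  simp [factor, List.map_inj_left]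

theorem factor_eq_factor_of_le {i j m n : ℕ} (hmn : m ≤ n) (h : factor x i n = factor x j n) :
    factor x i m = factor x j m :=
  (factor_eq_factor_iff x).2 fun t ht => (factor_eq_factor_iff x).1 h t (ht.trans_le hmn)

theorem novelSet_mono : Monotone (novelSet x) :=
  fun _ _ hmn _ hi j hj h => hi j hj (factor_eq_factor_of_le x hmn h)

theorem novel_of_novel_succ {i n : ℕ} (h : novel x (i + 1) (n - 1)) : novel x i n := by
  intro j hj he
  refine h (j + 1) (Nat.succ_lt_succ hj) ((factor_eq_factor_iff x).2 fun t ht => ?_)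
  have := (factor_eq_factor_iff x).1 he (t + 1) (by omega)
  rwa [← Nat.add_assoc, ← Nat.add_assoc, Nat.add_right_comm j, Nat.add_right_comm i] at this

theorem injOn_factor_novelSet (n : ℕ) : Set.InjOn (factor x · n) (novelSet x n) := by
  intro i hi j hj h
  rcases lt_trichotomy i j with hij | rfl | hij
  · exact absurd h (hj i hij)
  · rfl
  · exact absurd h.symm (hi j hij)

theorem image_factor_novelSet (n : ℕ) :
    (factor x · n) '' novelSet x n = {w | ∃ i, w = factor x i n} := by
  classical
  refine Set.Subset.antisymm (Set.image_subset_iff.2 fun i _ => ⟨i, rfl⟩) ?_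
  rintro _ ⟨i, rfl⟩
  have h : ∃ k, factor x k n = factor x i n := ⟨i, rfl⟩
  exact ⟨Nat.find h, fun j hj => (Nat.find_spec h).symm ▸ Nat.find_min h hj, Nat.find_spec h⟩

theorem ncard_novelSet (n : ℕ) : (novelSet x n).ncard = complexity x n := by
  rw [complexity, ← image_factor_novelSet, (injOn_factor_novelSet x n).ncard_image]

theorem finite_factors [Finite A] (n : ℕ) : {w : List A | ∃ i, w = factor x i n}.Finite := by
  refine (List.finite_length_eq A n).subset ?_
  rintro w ⟨i, rfl⟩
  simp [factor]

theorem finite_novelSet [Finite A] (n : ℕ) : (novelSet x n).Finite :=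
  Set.Finite.of_finite_image (image_factor_novelSet x n ▸ finite_factors x n)
    (injOn_factor_novelSet x n)

end Factors

theorem numBlocks_le_complexity_diff_general {A : Type*} [Fintype A] (x : ℕ → A) (n : ℕ) :
    numBlocks (novelSet x n) ≤ complexity x n - complexity x (n - 1) + 1 := by
  have hleft : ∀ i ∈ novelSet x n, i ≠ 0 → i - 1 ∉ novelSet x n →
      i ∈ novelSet x n \ novelSet x (n - 1) := by
    intro i hi hi0 hprev
    obtain ⟨k, rfl⟩ := Nat.exists_eq_succ_of_ne_zero hi0
    exact ⟨hi, fun hk => hprev (novel_of_novel_succ x hk)⟩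
  calc numBlocks (novelSet x n)
      ≤ (novelSet x n \ novelSet x (n - 1)).ncard + 1 :=
        numBlocks_le_ncard_add_one (finite_novelSet x n).sdiff hleft
    _ = complexity x n - complexity x (n - 1) + 1 := by
        rw [Set.ncard_sdiff (novelSet_mono x (Nat.sub_le n 1)) (finite_novelSet x _),
          ncard_novelSet, ncard_novelSet]

theorem numBlocks_le_complexity_diff {A : Type*} [Fintype A] (x : ℕ → A) (n : ℕ)
    (hn : 1 ≤ n) :
    numBlocks (novelSet x n) ≤ complexity x n - complexity x (n - 1) + 1 :=
  numBlocks_le_complexity_diff_general x n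
end

section
/- Let w = ∏_{n≥1} (n)₂ be the infinite word over {0,1} obtained by concatenating the binary representations of 1, 2, 3, … . Then for each n ≥ 5, the set E_w(n) of positions of novel occurrences of length-n factors has at least n − 2 maximal contiguous blocks. -/
/-- The infinite word obtained by concatenating the binary representations
(most significant bit first) of 1, 2, 3, ... ; its k-th letter. -/
def champernowne2 (k : ℕ) : ℕ :=
  (((List.range (k + 1)).map fun n => (Nat.digits 2 (n + 1)).reverse).flatten).getD k 0

/-!
The witnesses are the numbers `B_d = 2^(n-1) + 2^(d-1) - 1 = (1 0^(n-d) 1^(d-1))₂` for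
`2 ≤ d ≤ n - 2`. Followed by the leading `1` of `(B_d + 1)₂`, the block `(B_d)₂` shows `0^(n-d) 1^d`
one letter after its start, and this is the first occurrence of that factor: a run of at least two
zeros lies inside a single block `(V)₂`, and following it by `d` ones forces `V ≥ B_d`. The
occurrence at the start of `(B_d)₂` is not novel, because an odd number `2U + 1` has expansion
`(U)₂ 1`, which already occurs at the start of `(U)₂`. So each of these `n - 3` positions starts a
block of novel positions, and so does position `0`.
-/

namespace Champernowne2

lemma length_digits_two (v : ℕ) : (Nat.digits 2 v).length = v.size := by
  rw [Nat.digits_two_eq_bits, List.length_map, Nat.size_eq_bits_len]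

lemma testBit_size_sub_one {v : ℕ} (hv : v ≠ 0) : v.testBit (v.size - 1) = true := by
  have hpos := Nat.size_pos.mpr (Nat.pos_of_ne_zero hv)
  have hlt : v < 2 * 2 ^ (v.size - 1) := by
    rw [← pow_succ', Nat.sub_add_cancel hpos]
    exact Nat.lt_size_self v
  have hle : 2 ^ (v.size - 1) ≤ v := Nat.lt_size.mp (by omega)
  rw [Nat.testBit_eq_decide_div_mod_eq, Nat.div_eq_of_lt_le (k := 1) (by omega) (by omega)]
  rfl

lemma size_two_mul_add_one (U : ℕ) : (2 * U + 1).size = U.size + 1 := by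
  have := Nat.size_bit (b := true) (n := U) (by simp [Nat.bit_val])
  rwa [Nat.bit_val] at this

/-- `(u)₂` has `u.size` letters and `(0)₂` is empty, so `(v)₂` occupies the positions
`[startPos v, startPos (v + 1))` of `champernowne2`. -/
def startPos (v : ℕ) : ℕ := ∑ u ∈ Finset.range v, u.size

lemma startPos_succ (v : ℕ) : startPos (v + 1) = startPos v + v.size :=
  Finset.sum_range_succ _ _

lemma startPos_mono : Monotone startPos := fun _ _ h =>
  Finset.sum_le_sum_of_subset (Finset.range_subset_range.mpr h)

lemma startPos_lt_startPos {u v : ℕ} (hu : u ≠ 0) (h : u < v) : startPos u < startPos v := by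
  have := Nat.size_pos.mpr (Nat.pos_of_ne_zero hu)
  have := startPos_mono (Nat.succ_le_of_lt h)
  rw [startPos_succ] at this
  omega

lemma startPos_injOn : Set.InjOn startPos {v | v ≠ 0} := fun u hu v hv h => by
  by_contra hne
  rcases Nat.lt_or_gt_of_ne hne with huv | hvu
  · exact (startPos_lt_startPos hu huv).ne h
  · exact (startPos_lt_startPos hv hvu).ne h.symm

lemma self_le_startPos_succ (v : ℕ) : v ≤ startPos (v + 1) := by
  induction v with
  | zero => exact Nat.zero_le _
  | succ k ih =>
    have : 0 < (k + 1).size := Nat.size_pos.mpr k.succ_pos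
    rw [startPos_succ]
    omega

/-- `(1)₂ (2)₂ ⋯ (M)₂`, of which `champernowne2 k` is letter `k` when `M = k + 1`. -/
def binaryPrefix (M : ℕ) : List ℕ :=
  ((List.range M).map fun n => (Nat.digits 2 (n + 1)).reverse).flatten

lemma binaryPrefix_succ (M : ℕ) :
    binaryPrefix (M + 1) = binaryPrefix M ++ (Nat.digits 2 (M + 1)).reverse := by
  simp [binaryPrefix, List.range_succ]

lemma length_binaryPrefix (M : ℕ) : (binaryPrefix M).length = startPos (M + 1) := by
  induction M with
  | zero => simp [binaryPrefix, startPos]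
  | succ k ih =>
    rw [binaryPrefix_succ, List.length_append, ih, List.length_reverse, length_digits_two,
      startPos_succ (k + 1)]

lemma binaryPrefix_prefix_of_le {M M' : ℕ} (h : M ≤ M') : binaryPrefix M <+: binaryPrefix M' := by
  induction M', h using Nat.le_induction with
  | base => exact List.prefix_rfl
  | succ k _ ih => exact ih.trans (binaryPrefix_succ k ▸ List.prefix_append _ _)

lemma getD_binaryPrefix_of_le {M M' k : ℕ} (h : M ≤ M') (hk : k < (binaryPrefix M).length) :
    (binaryPrefix M').getD k 0 = (binaryPrefix M).getD k 0 := by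
  obtain ⟨t, ht⟩ := binaryPrefix_prefix_of_le h
  rw [← ht, List.getD_append _ _ _ _ hk]

lemma champernowne2_eq_getD {M k : ℕ} (hk : k < (binaryPrefix M).length) :
    champernowne2 k = (binaryPrefix M).getD k 0 := by
  have hk' : k < (binaryPrefix (k + 1)).length := by
    rw [length_binaryPrefix]
    exact self_le_startPos_succ (k + 1)
  change (binaryPrefix (k + 1)).getD k 0 = _
  rw [← getD_binaryPrefix_of_le (le_max_left M (k + 1)) hk,
    getD_binaryPrefix_of_le (le_max_right M (k + 1)) hk']

lemma champernowne2_startPos_add {v r : ℕ} (hr : r < v.size) :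
    champernowne2 (startPos v + r) = (v.testBit (v.size - 1 - r)).toNat := by
  obtain ⟨u, rfl⟩ : ∃ u, v = u + 1 :=
    Nat.exists_eq_succ_of_ne_zero (by rintro rfl; simp at hr)
  have hlen := length_binaryPrefix u
  rw [champernowne2_eq_getD (M := u + 1) (by rw [length_binaryPrefix, startPos_succ (u + 1)]; omega),
    binaryPrefix_succ, List.getD_append_right _ _ _ _ (by omega), hlen, Nat.add_sub_cancel_left,
    List.getD_reverse _ (by rwa [length_digits_two]), length_digits_two,
    Nat.getD_digits _ _ le_rfl, Nat.toNat_testBit]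

lemma champernowne2_startPos_succ_sub {v i : ℕ} (hi : i < v.size) :
    champernowne2 (startPos (v + 1) - (i + 1)) = (v.testBit i).toNat := by
  rw [startPos_succ, show startPos v + v.size - (i + 1) = startPos v + (v.size - 1 - i) by omega,
    champernowne2_startPos_add (by omega), show v.size - 1 - (v.size - 1 - i) = i by omega]

lemma champernowne2_startPos {v : ℕ} (hv : v ≠ 0) : champernowne2 (startPos v) = 1 := by
  have := champernowne2_startPos_add (r := 0) (Nat.size_pos.mpr (Nat.pos_of_ne_zero hv))
  rwa [Nat.add_zero, Nat.sub_zero, testBit_size_sub_one hv] at this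

lemma exists_startPos_add (p : ℕ) : ∃ v r, r < v.size ∧ p = startPos v + r := by
  induction p with
  | zero => exact ⟨1, 0, by simp, by simp [startPos]⟩
  | succ q ih =>
    obtain ⟨v, r, hr, rfl⟩ := ih
    rcases Nat.lt_or_ge (r + 1) v.size with h | h
    · exact ⟨v, r + 1, h, by omega⟩
    · refine ⟨v + 1, 0, Nat.size_pos.mpr v.succ_pos, ?_⟩
      rw [startPos_succ]
      omega

lemma champernowne2_le_one (k : ℕ) : champernowne2 k ≤ 1 := by
  obtain ⟨v, r, hr, rfl⟩ := exists_startPos_add k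
  rw [champernowne2_startPos_add hr]
  exact Bool.toNat_le _

section Novelty

variable {A : Type*} {x : ℕ → A} {n : ℕ}

lemma factor_eq_factor_iff {i j : ℕ} :
    factor x i n = factor x j n ↔ ∀ t < n, x (i + t) = x (j + t) := by
  simp [factor, List.map_inj_left]

lemma zero_mem_novelSet : 0 ∈ novelSet x n := fun _ hj => absurd hj (Nat.not_lt_zero _)

lemma injOn_factor_novelSet : Set.InjOn (factor x · n) (novelSet x n) := by
  intro i hi j hj h
  by_contra hne
  rcases Nat.lt_or_gt_of_ne hne with hij | hji
  · exact hj i hij h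
  · exact hi j hji h.symm

lemma novelSet_finite (hx : (Set.range x).Finite) : (novelSet x n).Finite := by
  have := hx.to_subtype
  let F : ℕ → Fin n → Set.range x := fun i t => ⟨x (i + t), _, rfl⟩
  refine Set.Finite.of_finite_image (f := F) (Set.toFinite _) fun i hi j hj h => ?_
  refine injOn_factor_novelSet hi hj (factor_eq_factor_iff.mpr fun t ht => ?_)
  exact congrArg Subtype.val (congrFun h ⟨t, ht⟩)

end Novelty

lemma card_le_numBlocks {S : Set ℕ} (hS : S.Finite) {s : Finset ℕ}
    (hs : ∀ i ∈ s, i ∈ S ∧ (i = 0 ∨ i - 1 ∉ S)) : s.card ≤ numBlocks S := by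
  rw [← Set.ncard_coe_finset]
  exact Set.ncard_le_ncard hs (hS.subset fun _ h => h.1)

/-- `(2U + 1)₂ = (U)₂ 1`, and `(U)₂` is followed by the leading `1` of `(U + 1)₂`. -/
lemma not_novel_startPos_of_odd {V : ℕ} (hV : Odd V) (h1 : 1 < V) :
    ¬ novel champernowne2 (startPos V) V.size := by
  obtain ⟨U, rfl⟩ := hV
  have hU : U ≠ 0 := by omega
  intro hnov
  refine hnov (startPos U) (startPos_lt_startPos hU (by omega)) (factor_eq_factor_iff.mpr ?_)
  intro t ht
  rw [size_two_mul_add_one] at ht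
  have ht₂ : t < (2 * U + 1).size := by rw [size_two_mul_add_one]; omega
  rcases Nat.lt_or_ge t U.size with ht' | ht'
  · rw [champernowne2_startPos_add ht', champernowne2_startPos_add ht₂, size_two_mul_add_one,
      show U.size + 1 - 1 - t = U.size - 1 - t + 1 by omega, Nat.testBit_add_one,
      show (2 * U + 1) / 2 = U by omega]
  · obtain rfl : t = U.size := by omega
    rw [← startPos_succ, champernowne2_startPos (by omega), champernowne2_startPos_add ht₂,
      size_two_mul_add_one, Nat.add_sub_cancel, Nat.sub_self, Nat.testBit_zero]
    simp

/-- `(zerosOnesBlock n d)₂ = 1 0^(n-d) 1^(d-1)`. -/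
def zerosOnesBlock (n d : ℕ) : ℕ := 2 ^ (n - 1) + 2 ^ (d - 1) - 1

lemma zerosOnesBlock_eq (n d : ℕ) : zerosOnesBlock n d = 2 ^ (n - 1) + (2 ^ (d - 1) - 1) :=
  Nat.add_sub_assoc Nat.one_le_two_pow _

section zerosOnesBlock

variable {n d : ℕ}

lemma size_zerosOnesBlock (hdn : d < n) : (zerosOnesBlock n d).size = n := by
  have hpow : 2 ^ (d - 1) ≤ 2 ^ (n - 1) := Nat.pow_le_pow_right two_pos (by omega)
  have htwo : 2 ^ n = 2 * 2 ^ (n - 1) := by rw [← pow_succ']; congr; omega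
  have hone := Nat.one_le_two_pow (n := n - 1)
  rw [zerosOnesBlock_eq]
  refine le_antisymm (Nat.size_le.mpr (by omega)) ?_
  have := Nat.lt_size.mpr (Nat.le_add_right (2 ^ (n - 1)) (2 ^ (d - 1) - 1))
  omega

lemma testBit_zerosOnesBlock {i : ℕ} (hi : i < n - 1) :
    (zerosOnesBlock n d).testBit i = decide (i < d - 1) := by
  rw [zerosOnesBlock_eq, Nat.testBit_two_pow_add_gt hi, Nat.testBit_two_pow_sub_one]

lemma odd_zerosOnesBlock (hd : 2 ≤ d) (hdn : d < n) : Odd (zerosOnesBlock n d) := by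
  have heven (k : ℕ) (hk : 2 ≤ k) : Even (2 ^ (k - 1)) := (Nat.even_pow' (by omega)).mpr even_two
  exact Nat.Even.sub_odd (le_add_left Nat.one_le_two_pow)
    ((heven n (by omega)).add (heven d hd)) odd_one

lemma startPos_zerosOnesBlock_injOn (n : ℕ) :
    Set.InjOn (fun d => startPos (zerosOnesBlock n d)) (Set.Ici 1) := by
  intro d₁ h₁ d₂ h₂ h
  have hne (d : ℕ) : zerosOnesBlock n d ≠ 0 := by rw [zerosOnesBlock_eq]; positivity
  have h := startPos_injOn (hne d₁) (hne d₂) h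
  have := Nat.one_le_two_pow (n := d₁ - 1)
  have := Nat.one_le_two_pow (n := d₂ - 1)
  rw [zerosOnesBlock_eq, zerosOnesBlock_eq] at h
  have := Nat.pow_right_injective le_rfl (show 2 ^ (d₁ - 1) = 2 ^ (d₂ - 1) by omega)
  rw [Set.mem_Ici] at h₁ h₂
  omega

/-- The last letter is the leading `1` of `(zerosOnesBlock n d + 1)₂`. -/
lemma champernowne2_startPos_zerosOnesBlock_add (hd : 1 ≤ d) (hdn : d < n) {t : ℕ} (ht : t < n) :
    champernowne2 (startPos (zerosOnesBlock n d) + 1 + t) = if t < n - d then 0 else 1 := by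
  have hsize := size_zerosOnesBlock hdn
  rcases Nat.lt_or_ge t (n - 1) with ht' | ht'
  · rw [add_assoc, champernowne2_startPos_add (by omega), hsize,
      testBit_zerosOnesBlock (by omega)]
    by_cases htd : t < n - d
    · simp [htd, show ¬ n - 1 - (1 + t) < d - 1 by omega]
    · simp [htd, show n - 1 - (1 + t) < d - 1 by omega]
  · obtain rfl : t = n - 1 := by omega
    rw [add_assoc, show 1 + (n - 1) = (zerosOnesBlock n d).size by omega, ← startPos_succ,
      champernowne2_startPos (by omega), if_neg (by omega)]

end zerosOnesBlock

lemma succ_mod_two_pow_eq_two_pow {V c e : ℕ} (hc : c ≠ 0) (hones : ∀ i < e, V.testBit i = true)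
    (hzeros : ∀ i, e ≤ i → i < e + c → V.testBit i = false) :
    (V + 1) % 2 ^ (e + c) = 2 ^ e := by
  have hmod : V % 2 ^ (e + c) = 2 ^ e - 1 := Nat.eq_of_testBit_eq fun i => by
    rw [Nat.testBit_mod_two_pow, Nat.testBit_two_pow_sub_one]
    by_cases hi : i < e
    · simp [hi, hones i hi, show i < e + c by omega]
    · by_cases hi' : i < e + c
      · simp [hi, hzeros i (by omega) hi']
      · simp [hi, hi']
  have hlt : 2 ^ e < 2 ^ (e + c) := Nat.pow_lt_pow_right one_lt_two (by omega)
  have hpos := Nat.one_le_two_pow (n := e)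
  rw [← Nat.mod_add_div V (2 ^ (e + c)), hmod,
    show 2 ^ e - 1 + 2 ^ (e + c) * (V / 2 ^ (e + c)) + 1
      = 2 ^ e + 2 ^ (e + c) * (V / 2 ^ (e + c)) by omega,
    Nat.add_mul_mod_self_left, Nat.mod_eq_of_lt hlt]

/-- Here `(m)₂ = a 0^(c-1) 1 0^e` with `a ≠ 0`; since `c ≥ 2`, a prefix of `d - e` ones of `(m)₂`
lies inside `(a)₂`, which makes `m` at least `(1 0^(c-1) 1 0^(d-1))₂`. -/
lemma two_pow_add_two_pow_le_of_leading_ones {m c d e : ℕ} (hc : 2 ≤ c) (hed : e < d)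
    (hm : 2 ^ (e + c) ≤ m) (hmod : m % 2 ^ (e + c) = 2 ^ e)
    (hlead : ∀ j < d - e, j < m.size → m.testBit (m.size - 1 - j) = true) :
    2 ^ (c + d - 1) + 2 ^ (d - 1) ≤ m := by
  set k := m.size
  have hk : e + c < k := Nat.lt_size.mpr hm
  have hlow (i : ℕ) (hi : i < e + c) : m.testBit i = (2 ^ e).testBit i := by
    rw [← hmod, Nat.testBit_mod_two_pow]
    simp [hi]
  have hgap : m.testBit (e + c - 1) = false := by
    rw [hlow _ (by omega), Nat.testBit_two_pow]
    simp only [decide_eq_false_iff_not]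
    omega
  have hkn : c + d ≤ k := by
    by_contra h
    have := hlead (k - (e + c)) (by omega) (by omega)
    rw [show k - 1 - (k - (e + c)) = e + c - 1 by omega, hgap] at this
    exact Bool.false_ne_true this
  obtain ⟨i, hdi, hik, hi⟩ : ∃ i, d - 1 ≤ i ∧ i < k - 1 ∧ m.testBit i = true := by
    rcases (by omega : d - e = 1 ∨ 2 ≤ d - e) with hg | hg
    · exact ⟨e, by omega, by omega, by rw [hlow e (by omega), Nat.testBit_two_pow_self]⟩
    · refine ⟨k - 2, by omega, by omega, ?_⟩
      simpa [show k - 1 - 1 = k - 2 by omega] using hlead 1 (by omega) (by omega)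
  have hrem : 2 ^ (d - 1) ≤ m % 2 ^ (k - 1) :=
    (Nat.pow_le_pow_right two_pos hdi).trans
      (Nat.ge_two_pow_of_testBit (by rw [Nat.testBit_mod_two_pow]; simp [hik, hi]))
  have hquot : 2 ^ (k - 1) ≤ 2 ^ (k - 1) * (m / 2 ^ (k - 1)) :=
    Nat.le_mul_of_pos_right _ (Nat.div_pos (Nat.lt_size.mp (show k - 1 < k by omega)) (by positivity))
  have := Nat.mod_add_div m (2 ^ (k - 1))
  have := Nat.pow_le_pow_right two_pos (show c + d - 1 ≤ k - 1 by omega)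
  omega

/-- Leading letters are `1`, so a run of zeros lies inside one block `(V)₂`. -/
lemma exists_block_of_zeros {q c : ℕ} (hc : c ≠ 0) (hz : ∀ t < c, champernowne2 (q + t) = 0) :
    ∃ V e, e + c < V.size ∧ startPos (V + 1) = q + c + e ∧
      ∀ i, e ≤ i → i < e + c → V.testBit i = false := by
  obtain ⟨V, r, hr, hq⟩ := exists_startPos_add (q + c - 1)
  have hV : V ≠ 0 := by rintro rfl; simp at hr
  have hlead : startPos V < q := by
    by_contra h
    have := hz (startPos V - q) (by omega)
    rw [show q + (startPos V - q) = startPos V by omega, champernowne2_startPos hV] at this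
    exact one_ne_zero this
  refine ⟨V, V.size - 1 - r, by omega, by rw [startPos_succ]; omega, fun i hi1 hi2 => ?_⟩
  have h := champernowne2_startPos_succ_sub (v := V) (i := i) (by omega)
  rw [startPos_succ,
    show startPos V + V.size - (i + 1) = q + (c + (V.size - 1 - r) - 1 - i) by omega,
    hz _ (by omega)] at h
  exact Bool.toNat_eq_zero.mp h.symm

lemma startPos_zerosOnesBlock_lt {n d q : ℕ} (hd : 1 ≤ d) (hdn : d + 2 ≤ n)
    (hq : ∀ t < n, champernowne2 (q + t) = if t < n - d then 0 else 1) :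
    startPos (zerosOnesBlock n d) < q := by
  set c := n - d
  obtain ⟨V, e, hsize, hend, hzeros⟩ := exists_block_of_zeros (q := q) (c := c) (by omega)
    fun t ht => by simpa [ht] using hq t (by omega)
  have hone (j : ℕ) (hj : j < d) : champernowne2 (q + c + j) = 1 := by
    simpa [add_assoc] using hq (c + j) (by omega)
  have hV : 2 ^ (V.size - 1) ≤ V := Nat.lt_size.mp (by omega)
  suffices zerosOnesBlock n d ≤ V by
    have := startPos_mono this
    rw [startPos_succ] at hend
    omega
  rcases le_or_gt d e with hde | hed
  -- `(V)₂` contains `1 0^c 1^d`, so it is longer than `(zerosOnesBlock n d)₂`.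
  · have := Nat.pow_le_pow_right two_pos (show n ≤ V.size - 1 by omega)
    have := Nat.size_le.mp (size_zerosOnesBlock (d := d) (n := n) (by omega)).le
    omega
  -- `(V)₂` ends in `0^c 1^e`, and the remaining `d - e` ones start `(V + 1)₂`.
  have hones : ∀ i < e, V.testBit i = true := by
    intro i hi
    have h := champernowne2_startPos_succ_sub (v := V) (i := i) (by omega)
    rw [show startPos (V + 1) - (i + 1) = q + c + (e - 1 - i) by omega, hone _ (by omega)] at h
    exact Bool.toNat_eq_one.mp h.symm
  have hlead : ∀ j < d - e, j < (V + 1).size → (V + 1).testBit ((V + 1).size - 1 - j) = true := by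
    intro j hj hjs
    have h := champernowne2_startPos_add hjs
    rw [hend, show q + c + e + j = q + c + (e + j) by omega, hone _ (by omega)] at h
    exact Bool.toNat_eq_one.mp h.symm
  have := two_pow_add_two_pow_le_of_leading_ones (by omega) hed
    ((Nat.pow_le_pow_right two_pos (by omega)).trans (hV.trans V.le_succ))
    (succ_mod_two_pow_eq_two_pow (by omega) hones hzeros) hlead
  rw [show c + d - 1 = n - 1 by omega] at this
  unfold zerosOnesBlock
  omega

lemma novel_startPos_zerosOnesBlock_add_one {n d : ℕ} (hd : 1 ≤ d) (hdn : d + 2 ≤ n) :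
    novel champernowne2 (startPos (zerosOnesBlock n d) + 1) n := by
  intro j hj heq
  have := startPos_zerosOnesBlock_lt hd hdn fun t ht => by
    rw [factor_eq_factor_iff.mp heq t ht, champernowne2_startPos_zerosOnesBlock_add hd (by omega) ht]
  omega

end Champernowne2

open Champernowne2 in
theorem champernowne2_many_blocks_general (n : ℕ) :
    n - 2 ≤ numBlocks (novelSet champernowne2 n) := by
  set p : ℕ → ℕ := fun d => startPos (zerosOnesBlock n d) + 1
  have hp : Set.InjOn p (Finset.Icc 2 (n - 2)) := fun d₁ h₁ d₂ h₂ h =>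
    startPos_zerosOnesBlock_injOn n (by simp at h₁ ⊢; omega) (by simp at h₂ ⊢; omega)
      (Nat.add_right_cancel h)
  have hcard : n - 2 ≤ (insert 0 ((Finset.Icc 2 (n - 2)).image p)).card := by
    rw [Finset.card_insert_of_notMem (by simp [p]), Finset.card_image_of_injOn hp, Nat.card_Icc]
    omega
  refine hcard.trans (card_le_numBlocks (novelSet_finite ?_) ?_)
  · exact (Set.finite_Iic 1).subset (Set.range_subset_iff.mpr champernowne2_le_one)
  simp only [Finset.mem_insert, Finset.mem_image, Finset.mem_Icc]
  rintro _ (rfl | ⟨d, hd, rfl⟩)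
  · exact ⟨zero_mem_novelSet, Or.inl rfl⟩
  have hsize := size_zerosOnesBlock (n := n) (d := d) (by omega)
  refine ⟨novel_startPos_zerosOnesBlock_add_one (by omega) (by omega), Or.inr ?_⟩
  have := not_novel_startPos_of_odd (odd_zerosOnesBlock (n := n) hd.1 (by omega))
    ((Nat.lt_size (m := 1)).mp (by omega))
  rwa [hsize] at this

theorem champernowne2_many_blocks (n : ℕ) (hn : 5 ≤ n) :
    n - 2 ≤ numBlocks (novelSet champernowne2 n) :=
  champernowne2_many_blocks_general n
end

section
/- Let z be an infinite word and n ≥ 2. Suppose z[i..i+n-1] and z[j..j+n-1] are both powers, where i < j ≤ i + n/3. Then for every t with i ≤ t ≤ j, the factor z[t..t+n-1] is a power; moreover, all the words z[t..t+n-1] for i ≤ t ≤ j are conjugates of each other. -/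
/-- x^k : the word x repeated k times. -/
def wpow {A : Type*} (x : List A) : ℕ → List A
  | 0 => []
  | k + 1 => x ++ wpow x k

/-- A word is a power if it is x^k for some word x and k ≥ 2. -/
def isPower {A : Type*} (w : List A) : Prop := ∃ x k, 2 ≤ k ∧ w = wpow x k

/-- w has period p. -/
def hasPeriod {A : Type*} (w : List A) (p : ℕ) : Prop :=
  ∀ i, i + p < w.length → w[i + p]? = w[i]?

/-- u and v are conjugate words. -/
def conjugate {A : Type*} (u v : List A) : Prop := ∃ s t, u = s ++ t ∧ v = t ++ s

/-- A nonempty word is primitive if it is not a power. -/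
def primitive {A : Type*} (x : List A) : Prop := x ≠ [] ∧ ¬ isPower x

/-! The two windows overlap in a factor of length `n - (j - i) ≥ 2n/3`. If they are powers with
roots of lengths `p` and `q` (both dividing `n` and at most `n/2`), then
`p + q - gcd p q ≤ 2n/3`, so by the Fine–Wilf periodicity lemma the overlap has period
`g = gcd p q`. The overlap contains a full root of each window, so both windows, and hence their
union `z[i..j+n-1]`, have period `g`. Since `g ∣ n`, every length-`n` window in between is a power
and a rotation of the first one. -/

theorem Nat.three_mul_add_sub_gcd_le {p q n : ℕ} (hpn : p ∣ n) (hqn : q ∣ n)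
    (h2p : 2 * p ≤ n) (h2q : 2 * q ≤ n) : 3 * (p + q - p.gcd q) ≤ 2 * n := by
  obtain ⟨a, b, hab, hpa, hqb⟩ := Nat.exists_coprime p q
  set g := p.gcd q
  rcases Nat.eq_zero_or_pos g with hg | hg
  · simp only [hg, mul_zero] at hpa hqb
    omega
  obtain ⟨c, rfl⟩ : a * b * g ∣ n := by
    have hl : g * Nat.lcm p q = g * (a * b * g) := by
      rw [Nat.gcd_mul_lcm, hpa, hqb]; ring
    rw [← Nat.eq_of_mul_eq_mul_left hg hl]
    exact Nat.lcm_dvd hpn hqn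
  have hab2 : ¬ (a = 2 ∧ b = 2) := by rintro ⟨rfl, rfl⟩; norm_num at hab
  rw [hpa] at h2p; rw [hqb] at h2q; rw [hpa, hqb]
  have ha : 1 ≤ a := by rcases a with _ | a <;> simp_all
  have hb : 1 ≤ b := by rcases b with _ | b <;> simp_all
  suffices 3 * (a + b - 1) ≤ 2 * (a * b * c) by
    have e : a * g + b * g - g = (a + b - 1) * g := by
      rw [Nat.sub_mul, Nat.add_mul, one_mul]
    rw [e]; nlinarith
  have hbc : 2 ≤ b * c := by nlinarith
  have hac : 2 ≤ a * c := by nlinarith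
  rcases Nat.lt_or_ge c 2 with hc | hc
  · obtain rfl : c = 1 := by interval_cases c <;> simp_all
    simp only [mul_one] at hac hbc ⊢
    have : 5 ≤ a + b := by omega
    zify [show 1 ≤ a + b by omega] at *
    nlinarith [mul_nonneg (sub_nonneg.2 hac) (sub_nonneg.2 hbc)]
  · zify [show 1 ≤ a + b by omega]
    nlinarith

namespace List

variable {α : Type*} {w : List α} {a d k m n p q g : ℕ}

theorem HasPeriod.of_dvd (h : w.HasPeriod p) (hpq : p ∣ q) : w.HasPeriod q := by
  rw [hasPeriod_iff_forall_getElem?_mod] at h ⊢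
  intro i hi
  rw [h i hi, h (i % q) ((Nat.mod_le i q).trans_lt hi), Nat.mod_mod_of_dvd i hpq]

theorem HasPeriod.of_take (h : w.HasPeriod q) (hq : 0 < q) (hgq : g ∣ q)
    (hg : (w.take q).HasPeriod g) : w.HasPeriod g := by
  rw [hasPeriod_iff_forall_getElem?_mod] at h hg ⊢
  intro i hi
  have hiq : i % q < q := Nat.mod_lt i hq
  have hig : i % g < q := by
    rw [← Nat.mod_mod_of_dvd i hgq]
    exact (Nat.mod_le _ _).trans_lt hiq
  calc w[i]? = w[i % q]? := h i hi
    _ = (w.take q)[i % q]? := (getElem?_take_of_lt hiq).symm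
    _ = (w.take q)[i % q % g]? := hg _ (by simp [hiq, (Nat.mod_le i q).trans_lt hi])
    _ = w[i % g]? := by rw [Nat.mod_mod_of_dvd i hgq, getElem?_take_of_lt hig]

theorem HasPeriod.take_drop_of_dvd (h : w.HasPeriod p) (ha : p ∣ a) (hm : a + m ≤ w.length) :
    (w.drop a).take m = w.take m := by
  refine ext_getElem? fun s => ?_
  simp only [getElem?_take, getElem?_drop]
  split_ifs with hs
  · rw [add_comm]
    exact (hasPeriod_iff_getElem?.1 (h.of_dvd ha) s (by omega)).symm
  · rfl

theorem HasPeriod.take_drop_eq_rotate (h : w.HasPeriod n) (hk : k + n ≤ w.length) :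
    (w.drop k).take n = (w.take n).rotate k := by
  refine ext_getElem? fun s => ?_
  rcases Nat.lt_or_ge s n with hs | hs
  · have hlen : (w.take n).length = n := by simp; omega
    rw [getElem?_take_of_lt hs, getElem?_drop, getElem?_rotate (by omega), hlen,
      getElem?_take_of_lt (Nat.mod_lt _ (by omega)), add_comm s k]
    exact hasPeriod_iff_forall_getElem?_mod.1 h _ (by omega)
  · rw [getElem?_eq_none (by simp; omega), getElem?_eq_none (by simp; omega)]

theorem hasPeriod_of_take_of_drop (h₁ : (w.take n).HasPeriod p) (h₂ : (w.drop d).HasPeriod p)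
    (h : d + p ≤ n) : w.HasPeriod p := by
  rw [hasPeriod_iff_getElem?] at h₁ h₂ ⊢
  intro i hi
  by_cases hin : i + p < n
  · have := h₁ i (by simp; omega)
    rwa [getElem?_take_of_lt (by omega), getElem?_take_of_lt hin] at this
  · have := h₂ (i - d) (by simp; omega)
    rwa [getElem?_drop, getElem?_drop, Nat.add_sub_cancel' (by omega), ← Nat.add_assoc,
      Nat.add_sub_cancel' (by omega)] at this

end List

open List

section Words

variable {A : Type*}

theorem length_wpow (x : List A) (k : ℕ) : (wpow x k).length = k * x.length := by
  induction k with
  | zero => simp [wpow]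
  | succ k ih => simp only [wpow, length_append, ih]; ring

theorem getElem?_wpow (x : List A) {k s : ℕ} (hs : s < k * x.length) :
    (wpow x k)[s]? = x[s % x.length]? := by
  induction k generalizing s with
  | zero => omega
  | succ k ih =>
    rw [wpow]
    rcases Nat.lt_or_ge s x.length with h | h
    · rw [getElem?_append_left h, Nat.mod_eq_of_lt h]
    · rw [getElem?_append_right h, ih (by rw [Nat.succ_mul] at hs; omega), Nat.mod_eq_sub_mod h]

theorem isPower_iff_hasPeriod {w : List A} :
    isPower w ↔ ∃ p, p ∣ w.length ∧ 2 * p ≤ w.length ∧ w.HasPeriod p := by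
  constructor
  · rintro ⟨x, k, hk, rfl⟩
    refine ⟨x.length, by simp [length_wpow], by rw [length_wpow]; exact Nat.mul_le_mul_right _ hk,
      hasPeriod_iff_forall_getElem?_mod.2 fun s hs => ?_⟩
    rw [length_wpow] at hs
    rw [getElem?_wpow x hs, getElem?_wpow x ((Nat.mod_le _ _).trans_lt hs), Nat.mod_mod]
  · rintro ⟨p, hpn, h2p, hp⟩
    rcases Nat.eq_zero_or_pos p with rfl | hp0
    · obtain rfl : w = [] := by simpa using hpn
      exact ⟨[], 2, le_rfl, rfl⟩
    have htake : (w.take p).length = p := by simp; omega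
    have hlen : w.length / p * (w.take p).length = w.length := by
      rw [htake, Nat.div_mul_cancel hpn]
    refine ⟨w.take p, w.length / p, (Nat.le_div_iff_mul_le hp0).2 (by omega),
      ext_getElem? fun s => ?_⟩
    rcases Nat.lt_or_ge s w.length with hs | hs
    · rw [getElem?_wpow _ (by rwa [hlen]), htake, getElem?_take_of_lt (Nat.mod_lt _ hp0)]
      exact hasPeriod_iff_forall_getElem?_mod.1 hp s hs
    · rw [getElem?_eq_none hs, getElem?_eq_none (by rwa [length_wpow, hlen])]

theorem conjugate_iff_isRotated {u v : List A} : conjugate u v ↔ u ~r v := by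
  constructor
  · rintro ⟨s, t, rfl, rfl⟩
    exact isRotated_append
  · rintro ⟨k, rfl⟩
    exact ⟨_, _, (take_append_drop (k % u.length) u).symm, rotate_eq_drop_append_take_mod⟩

end Words

section Factors

variable {A : Type*} {z : ℕ → A} {t m n : ℕ}

theorem length_factor (z : ℕ → A) (t n : ℕ) : (factor z t n).length = n := by
  simp [factor]

theorem factor_add (z : ℕ → A) (t a b : ℕ) :
    factor z t (a + b) = factor z t a ++ factor z (t + a) b := by
  simp [factor, range_add, Function.comp_def, Nat.add_assoc]

theorem take_factor (h : m ≤ n) : (factor z t n).take m = factor z t m := by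
  obtain ⟨r, rfl⟩ := Nat.exists_eq_add_of_le h
  rw [factor_add, take_left' (length_factor z t m)]

theorem drop_factor (h : m ≤ n) : (factor z t n).drop m = factor z (t + m) (n - m) := by
  obtain ⟨r, rfl⟩ := Nat.exists_eq_add_of_le h
  rw [factor_add, drop_left' (length_factor z t m), Nat.add_sub_cancel_left]

theorem factor_infix {s L : ℕ} (h₁ : s ≤ t) (h₂ : t + n ≤ s + L) :
    factor z t n <:+: factor z s L := by
  obtain ⟨a, rfl⟩ := Nat.exists_eq_add_of_le h₁
  obtain ⟨b, rfl⟩ : ∃ b, L = a + n + b := ⟨L - a - n, by omega⟩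
  exact ⟨factor z s a, factor z (s + a + n) b, by
    rw [factor_add, factor_add, ← Nat.add_assoc]⟩

theorem factor_add_eq_rotate {k : ℕ} (h : (factor z t (k + n)).HasPeriod n) :
    factor z (t + k) n = (factor z t n).rotate k := by
  have := h.take_drop_eq_rotate (by rw [length_factor])
  rwa [drop_factor (by omega), Nat.add_sub_cancel_left, take_factor le_rfl,
    take_factor (by omega)] at this

theorem hasPeriod_factor_gcd_of_overlap {i d p q : ℕ} (hd : 3 * d ≤ n) (hp : 0 < p) (hq : 0 < q)
    (hpn : p ∣ n) (hqn : q ∣ n) (h2p : 2 * p ≤ n) (h2q : 2 * q ≤ n)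
    (hu : (factor z i n).HasPeriod p) (hv : (factor z (i + d) n).HasPeriod q) :
    (factor z i (d + n)).HasPeriod (p.gcd q) := by
  have hgp : p.gcd q ≤ p := Nat.gcd_le_left q hp
  have hO : (factor z (i + d) (n - d)).HasPeriod (p.gcd q) :=
    (hu.infix (factor_infix (by omega) (by omega))).gcd (hv.infix (factor_infix le_rfl (by omega)))
      (by rw [length_factor]; have := Nat.three_mul_add_sub_gcd_le hpn hqn h2p h2q; omega)
  have hv' : (factor z (i + d) n).HasPeriod (p.gcd q) := by
    refine hv.of_take hq (Nat.gcd_dvd_right p q) ?_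
    rw [take_factor (by omega)]
    exact hO.infix (factor_infix le_rfl (by omega))
  have hu' : (factor z i n).HasPeriod (p.gcd q) := by
    -- the last `p`-block of the first window lies in the overlap and equals its first `p`-block
    refine hu.of_take hp (Nat.gcd_dvd_left p q) ?_
    rw [← hu.take_drop_of_dvd (Nat.dvd_sub hpn dvd_rfl) (by rw [length_factor]; omega),
      drop_factor (by omega), take_factor (by omega)]
    exact hO.infix (factor_infix (by omega) (by omega))
  refine hasPeriod_of_take_of_drop ?_ ?_ (show d + p.gcd q ≤ n by omega)
  · rwa [take_factor (by omega)]
  · rwa [drop_factor (by omega), Nat.add_sub_cancel_left]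

end Factors

theorem powers_in_between_general {A : Type*} (z : ℕ → A) (n i j : ℕ)
    (hi : isPower (factor z i n)) (hj : isPower (factor z j n))
    (hij : i < j) (hj3 : j ≤ i + n / 3) :
    (∀ t, i ≤ t → t ≤ j → isPower (factor z t n)) ∧
    (∀ t₁ t₂, i ≤ t₁ → t₁ ≤ j → i ≤ t₂ → t₂ ≤ j →
      conjugate (factor z t₁ n) (factor z t₂ n)) := by
  obtain ⟨d, rfl⟩ := Nat.exists_eq_add_of_le hij.le
  have hn : 0 < n := by omega
  rw [isPower_iff_hasPeriod, length_factor] at hi hj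
  obtain ⟨p, hpn, h2p, hp⟩ := hi
  obtain ⟨q, hqn, h2q, hq⟩ := hj
  have hp0 : 0 < p := Nat.pos_of_dvd_of_pos hpn hn
  have hW := hasPeriod_factor_gcd_of_overlap (by omega) hp0 (Nat.pos_of_dvd_of_pos hqn hn)
    hpn hqn h2p h2q hp hq
  have hgn : p.gcd q ∣ n := (Nat.gcd_dvd_left p q).trans hpn
  have hrot : ∀ t, i ≤ t → t ≤ i + d → factor z t n = (factor z i n).rotate (t - i) := by
    intro t h₁ h₂
    obtain ⟨k, rfl⟩ := Nat.exists_eq_add_of_le h₁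
    rw [Nat.add_sub_cancel_left]
    exact factor_add_eq_rotate ((hW.of_dvd hgn).infix (factor_infix le_rfl (by omega)))
  refine ⟨fun t h₁ h₂ => ?_, fun t₁ t₂ h₁ h₂ h₃ h₄ => ?_⟩
  · rw [isPower_iff_hasPeriod, length_factor]
    exact ⟨p.gcd q, hgn, by linarith [Nat.gcd_le_left q hp0],
      hW.infix (factor_infix h₁ (by omega))⟩
  · rw [hrot t₁ h₁ h₂, hrot t₂ h₃ h₄, conjugate_iff_isRotated]
    exact (IsRotated.forall _ _).trans (IsRotated.forall _ _).symm

theorem powers_in_between {A : Type*} (z : ℕ → A) (n i j : ℕ) (hn : 2 ≤ n)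
    (hi : isPower (factor z i n)) (hj : isPower (factor z j n))
    (hij : i < j) (hj3 : j ≤ i + n / 3) :
    (∀ t, i ≤ t → t ≤ j → isPower (factor z t n)) ∧
    (∀ t₁ t₂, i ≤ t₁ → t₁ ≤ j → i ≤ t₂ → t₂ ≤ j →
      conjugate (factor z t₁ n) (factor z t₂ n)) :=
  powers_in_between_general z n i j hi hj hij hj3
end

section
/- (Fine–Wilf) If a finite word v has periods p and q, and |v| ≥ p + q, then v has period gcd(p, q). -/
/-!
Euclid's algorithm on periods. If `p ≤ q` are periods of `v` and `|v| ≥ p + q`, then `q - p` is a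
period: for a position `i`, either `i + q` lies in `v` and one steps forward by `q`, then back by
`p`, or it does not, and then `i ≥ p`, so one steps back by `p`, then forward by `q`. The pair
`(p, q - p)` has the same gcd and sum `q ≤ |v|`, so the argument can be repeated until one period
vanishes and the other is `gcd p q`.
-/

theorem hasPeriod_sub {A : Type*} {v : List A} {p q : ℕ} (hpq : p ≤ q)
    (hp : hasPeriod v p) (hq : hasPeriod v q) (hlen : p + q ≤ v.length) :
    hasPeriod v (q - p) := by
  intro i hi
  by_cases hiq : i + q < v.length
  · have forward : v[i + q]? = v[i]? := hq i hiq
    have back : v[i + (q - p) + p]? = v[i + (q - p)]? := hp (i + (q - p)) (by omega)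
    rw [show i + (q - p) + p = i + q by omega] at back
    rw [← back, forward]
  · have back : v[i - p + p]? = v[i - p]? := hp (i - p) (by omega)
    have forward : v[i - p + q]? = v[i - p]? := hq (i - p) (by omega)
    rw [show i - p + p = i by omega] at back
    rw [show i - p + q = i + (q - p) by omega] at forward
    rw [forward, back]

theorem fine_wilf {A : Type*} (v : List A) (p q : ℕ)
    (hp : hasPeriod v p) (hq : hasPeriod v q) (hlen : p + q ≤ v.length) :
    hasPeriod v (Nat.gcd p q) := by
  induction hn : p + q using Nat.strong_induction_on generalizing p q with
  | _ n ih =>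
  wlog hpq : p ≤ q generalizing p q
  · rw [Nat.gcd_comm]
    exact this q p hq hp (by omega) (by omega) (by omega)
  rcases Nat.eq_zero_or_pos p with rfl | hp_pos
  · simpa using hq
  rw [← Nat.gcd_sub_self_right hpq]
  exact ih q (by omega) p (q - p) hp (hasPeriod_sub hpq hp hq hlen) (by omega) (by omega)
end

section
/- Let I₁, …, I_n be arcs (contiguous blocks) of the cyclic group ℤ/dℤ. Define I'_j = I_j \ (I₁ ∪ ⋯ ∪ I_{j−1}) for each j. Then #I'₁ + #I'₂ + ⋯ + #I'_n + #(I'₁ ∪ ⋯ ∪ I'_n) ≤ 2n, where #S denotes the number of maximal arcs (maximal sets of cyclically consecutive elements) composing a subset S of ℤ/dℤ. -/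
/-- S is an arc (a nonempty set of cyclically consecutive elements) of ℤ/dℤ. -/
def IsArc {d : ℕ} (S : Finset (ZMod d)) : Prop :=
  ∃ (a : ZMod d) (ℓ : ℕ), 1 ≤ ℓ ∧ ℓ ≤ d ∧ S = (Finset.range ℓ).image fun t : ℕ => a + (t : ZMod d)

/-- The number of maximal arcs composing a subset S of ℤ/dℤ: if S is everything,
there is one arc; otherwise, count left endpoints of arcs. -/
def numArcs {d : ℕ} [NeZero d] (S : Finset (ZMod d)) : ℕ :=
  if S = Finset.univ then 1 else (S.filter fun s => s - 1 ∉ S).card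

/-!
Count the arcs of a proper subset by their left ends `s` (`s ∈ S`, `s - 1 ∉ S`), or equally well
by their right ends. Adding the arcs one at a time, it suffices that for an arc `A` and any `U`,
`#(A ∪ U) + #(A \ U) ≤ #U + 2`. A left end of `A ∪ U` is the left end of `A` or a left end `s`
of `U` with `s - 1 ∉ A`; a right end `r` of `A \ U` is the right end of `A` or has `r + 1` a left
end `s` of `U` with `s - 1 ∈ A`. Each left end of `U` is thus charged at most once.
-/

open Finset

section Ends

variable {G : Type*} [AddGroupWithOne G] [DecidableEq G]

def leftEnds (S : Finset G) : Finset G := {s ∈ S | s - 1 ∉ S}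

def rightEnds (S : Finset G) : Finset G := {s ∈ S | s + 1 ∉ S}

@[simp]
lemma mem_leftEnds {S : Finset G} {x : G} : x ∈ leftEnds S ↔ x ∈ S ∧ x - 1 ∉ S := mem_filter

@[simp]
lemma mem_rightEnds {S : Finset G} {x : G} : x ∈ rightEnds S ↔ x ∈ S ∧ x + 1 ∉ S := mem_filter

lemma card_leftEnds_eq_card_rightEnds (S : Finset G) : #(leftEnds S) = #(rightEnds S) := by
  have hshift : #{s ∈ S | s - 1 ∈ S} = #{s ∈ S | s + 1 ∈ S} :=
    card_nbij' (· - 1) (· + 1) (fun s hs => by simp_all) (fun s hs => by simp_all)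
      (fun s _ => sub_add_cancel s 1) (fun s _ => add_sub_cancel_right s 1)
  have hl := card_filter_add_card_filter_not (s := S) (fun s => s - 1 ∈ S)
  have hr := card_filter_add_card_filter_not (s := S) (fun s => s + 1 ∈ S)
  unfold leftEnds rightEnds
  omega

variable (A U : Finset G)

lemma leftEnds_union_subset : leftEnds (A ∪ U) ⊆ leftEnds A ∪ {s ∈ leftEnds U | s - 1 ∉ A} := by
  intro s
  by_cases hs : s ∈ U <;> simp_all

lemma rightEnds_sdiff_subset :
    rightEnds (A \ U) ⊆ rightEnds A ∪ {s ∈ leftEnds U | s - 1 ∈ A}.image (· - 1) := by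
  intro r hr
  simp only [mem_rightEnds, mem_sdiff, not_and, not_not] at hr
  by_cases hrA : r + 1 ∈ A
  · exact mem_union_right _ <| mem_image.mpr ⟨r + 1, by simp_all, add_sub_cancel_right r 1⟩
  · exact mem_union_left _ <| mem_rightEnds.mpr ⟨hr.1.1, hrA⟩

lemma card_rightEnds_sdiff_le : #(rightEnds (A \ U)) ≤ #(rightEnds A) + #(leftEnds U) :=
  calc #(rightEnds (A \ U))
      ≤ #(rightEnds A) + #({s ∈ leftEnds U | s - 1 ∈ A}.image (· - 1)) :=
        (card_le_card (rightEnds_sdiff_subset A U)).trans (card_union_le _ _)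
    _ ≤ #(rightEnds A) + #(leftEnds U) := by grw [card_image_le, card_filter_le]

lemma card_leftEnds_union_add_card_rightEnds_sdiff_le :
    #(leftEnds (A ∪ U)) + #(rightEnds (A \ U)) ≤
      #(leftEnds A) + #(rightEnds A) + #(leftEnds U) := by
  have hl := (card_le_card (leftEnds_union_subset A U)).trans (card_union_le _ _)
  have hr := (card_le_card (rightEnds_sdiff_subset A U)).trans (card_union_le _ _)
  have hsplit := card_filter_add_card_filter_not (s := leftEnds U) (fun s => s - 1 ∈ A)
  grw [card_image_le] at hr
  omega

end Ends

lemma IsArc.card_leftEnds_le_one {d : ℕ} {A : Finset (ZMod d)} (hA : IsArc A) :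
    #(leftEnds A) ≤ 1 := by
  obtain ⟨a, ℓ, -, -, rfl⟩ := hA
  refine card_le_one_iff_subset_singleton.mpr ⟨a, fun s hs => ?_⟩
  simp only [mem_leftEnds, mem_image, mem_range] at hs
  obtain ⟨⟨t, ht, rfl⟩, hprev⟩ := hs
  rcases t with _ | t
  · simp
  · exact absurd ⟨t, by omega, by push_cast; ring⟩ hprev

section ZMod

variable {d : ℕ} [NeZero d]

lemma numArcs_univ : numArcs (univ : Finset (ZMod d)) = 1 := if_pos rfl

lemma numArcs_of_ne_univ {S : Finset (ZMod d)} (h : S ≠ univ) : numArcs S = #(leftEnds S) :=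
  if_neg h

lemma numArcs_empty : numArcs (∅ : Finset (ZMod d)) = 0 := by
  rw [numArcs_of_ne_univ univ_nonempty.ne_empty.symm]
  rfl

lemma numArcs_union_add_numArcs_sdiff_le {A : Finset (ZMod d)} (hA : #(leftEnds A) ≤ 1)
    (U : Finset (ZMod d)) : numArcs (A ∪ U) + numArcs (A \ U) ≤ numArcs U + 2 := by
  have hR : #(rightEnds A) ≤ 1 := card_leftEnds_eq_card_rightEnds A ▸ hA
  by_cases hU : U = univ
  · rw [hU, union_eq_right.mpr (subset_univ A), sdiff_eq_empty_iff_subset.mpr (subset_univ A),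
      numArcs_univ, numArcs_empty]
    omega
  by_cases hAU : A \ U = univ
  · have hU0 : U = ∅ := eq_empty_of_forall_notMem fun x hx =>
      (mem_sdiff.mp (hAU ▸ mem_univ x)).2 hx
    rw [hU0, sdiff_empty] at hAU
    simp [hU0, hAU, numArcs_univ, numArcs_empty]
  rw [numArcs_of_ne_univ hU, numArcs_of_ne_univ hAU, card_leftEnds_eq_card_rightEnds (A \ U)]
  by_cases hAU' : A ∪ U = univ
  · have := card_rightEnds_sdiff_le A U
    rw [hAU', numArcs_univ]
    omega
  · have := card_leftEnds_union_add_card_rightEnds_sdiff_le A U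
    rw [numArcs_of_ne_univ hAU']
    omega

end ZMod

lemma biUnion_range_sdiff_biUnion {α : Type*} [DecidableEq α] (I : ℕ → Finset α) (n : ℕ) :
    ((range n).biUnion fun j => I j \ (range j).biUnion I) = (range n).biUnion I := by
  induction n with
  | zero => simp
  | succ n ih => rw [range_add_one, biUnion_insert, biUnion_insert, ih, sdiff_union_self_eq_union]

theorem sum_numArcs_le (d n : ℕ) [NeZero d] (I : ℕ → Finset (ZMod d))
    (hI : ∀ j < n, IsArc (I j)) :
    (∑ j ∈ Finset.range n, numArcs (I j \ (Finset.range j).biUnion I)) +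
      numArcs ((Finset.range n).biUnion fun j => I j \ (Finset.range j).biUnion I) ≤
      2 * n := by
  induction n with
  | zero => simp [numArcs_empty]
  | succ n ih =>
    rw [biUnion_range_sdiff_biUnion] at ih ⊢
    rw [sum_range_succ, range_add_one, biUnion_insert]
    have hprev := ih fun j hj => hI j (by omega)
    have hstep := numArcs_union_add_numArcs_sdiff_le
      (hI n n.lt_add_one).card_leftEnds_le_one ((range n).biUnion I)
    omega
end
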